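/- arXiv:2206.06625 — 5 statements merged into one kernel-verified Lean document; each statement's English description precedes it below -/
import Mathlib

section
/- Let C : ℝ → Matrix (Fin 2) (Fin 2) ℂ depend smoothly on a parameter λ and satisfy ∂_z C(z,λ) = C(z,λ) · ζ(z,λ) with C(0,λ) = 1 for all λ. Then for all z and λ, (∂_λ C(z,λ)) · C(z,λ)⁻¹ = ∫_0^z C(t,λ) · (∂_λ ζ(t,λ)) · C(t,λ)⁻¹ dt. -/
open Matrix intervalIntegral

attribute [local instance] Matrix.normedAddCommGroup Matrix.normedSpace

/-!
For fixed `λ` and `μ`, the product `C(z,μ) C(z,λ)⁻¹` has `z`-derivative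
`C(z,μ) (ζ(z,μ) - ζ(z,λ)) C(z,λ)⁻¹`, so that
`C(z,μ) C(z,λ)⁻¹ - 1 = ∫₀^z C(t,μ) (ζ(t,μ) - ζ(t,λ)) C(t,λ)⁻¹ dt` holds exactly.
Differentiating both sides in `μ` at `μ = λ` gives the formula. Under the integral this is
dominated convergence: by the mean value inequality the integrand is `O(|μ - λ|)` uniformly for
`t` between `0` and `z`.
-/

open Filter Topology Set Function Metric
open scoped Interval

theorem intervalIntegral.hasDerivAt_integral_of_norm_sub_le {E : Type*} [NormedAddCommGroup E]
    [NormedSpace ℝ E] {G : ℝ → ℝ → E} {G' : ℝ → E} {a b x₀ K : ℝ}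
    (hG : ∀ x, IntervalIntegrable (G · x) MeasureTheory.volume a b)
    (hlip : ∀ᶠ x in 𝓝 x₀, ∀ t ∈ Ι a b, ‖G t x - G t x₀‖ ≤ K * |x - x₀|)
    (hG' : ∀ t ∈ Ι a b, HasDerivAt (G t) (G' t) x₀) :
    HasDerivAt (fun x => ∫ t in a..b, G t x) (∫ t in a..b, G' t) x₀ := by
  have hslope :
      slope (fun x => ∫ t in a..b, G t x) x₀ = fun x => ∫ t in a..b, slope (G t) x₀ x := by
    funext x
    simp only [slope_def_module, ← integral_sub (hG x) (hG x₀), integral_smul]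
  refine hasDerivAt_iff_tendsto_slope.2 ?_
  rw [hslope]
  refine tendsto_integral_filter_of_dominated_convergence (fun _ => K)
    (Eventually.of_forall fun x =>
      (((hG x).sub (hG x₀)).smul _).aestronglyMeasurable_restrict_uIoc)
    ?_ intervalIntegrable_const
    (Eventually.of_forall fun t ht => hasDerivAt_iff_tendsto_slope.1 (hG' t ht))
  filter_upwards [self_mem_nhdsWithin, nhdsWithin_le_nhds hlip] with x hx hxlip
  refine Eventually.of_forall fun t ht => ?_
  have hx' : 0 < |x - x₀| := abs_pos.2 (sub_ne_zero.2 hx)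
  rw [slope_def_module, norm_smul, norm_inv, Real.norm_eq_abs, inv_mul_le_iff₀ hx', mul_comm]
  exact hxlip t ht

section

variable {n : Type*} [Fintype n]

theorem Matrix.norm_mul_le_card_mul {m p 𝔸 : Type*} [Fintype m] [Fintype p] [NormedRing 𝔸]
    (A : Matrix m n 𝔸) (B : Matrix n p 𝔸) :
    ‖A * B‖ ≤ Fintype.card n * ‖A‖ * ‖B‖ := by
  rw [Matrix.norm_le_iff (by positivity)]
  intro i j
  calc ‖(A * B) i j‖ ≤ ∑ k, ‖A i k * B k j‖ := by rw [Matrix.mul_apply]; exact norm_sum_le _ _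
    _ ≤ ∑ _k : n, ‖A‖ * ‖B‖ := Finset.sum_le_sum fun k _ => (norm_mul_le _ _).trans <|
        mul_le_mul (norm_entry_le_entrywise_sup_norm A) (norm_entry_le_entrywise_sup_norm B)
          (norm_nonneg _) (norm_nonneg _)
    _ = Fintype.card n * ‖A‖ * ‖B‖ := by
      rw [Finset.sum_const, Finset.card_univ, nsmul_eq_mul, mul_assoc]

theorem HasDerivAt.matrix_mul {m p 𝔸 : Type*} [Fintype m] [Fintype p] [NormedRing 𝔸]
    [NormedAlgebra ℝ 𝔸] {A : ℝ → Matrix m n 𝔸} {B : ℝ → Matrix n p 𝔸} {A' : Matrix m n 𝔸}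
    {B' : Matrix n p 𝔸} {t : ℝ} (hA : HasDerivAt A A' t) (hB : HasDerivAt B B' t) :
    HasDerivAt (fun s => A s * B s) (A' * B t + A t * B') t := by
  refine hasDerivAt_pi.2 fun i => hasDerivAt_pi.2 fun j => ?_
  simp only [Matrix.add_apply, mul_apply, ← Finset.sum_add_distrib]
  exact HasDerivAt.fun_sum fun k _ =>
    (hasDerivAt_pi.1 (hasDerivAt_pi.1 hA i) k).fun_mul
      (hasDerivAt_pi.1 (hasDerivAt_pi.1 hB k) j)

section

variable {𝕂 : Type*} [DecidableEq n] [NormedField 𝕂]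

theorem ContinuousAt.matrix_inv {X : Type*} [TopologicalSpace X] {A : X → Matrix n n 𝕂}
    {x : X} (hA : ContinuousAt A x) (hx : IsUnit (A x)) : ContinuousAt (fun y => (A y)⁻¹) x := by
  refine (continuousAt_matrix_inv _ ?_).comp hA
  simp only [Ring.inverse_eq_inv']
  exact continuousAt_inv₀ ((isUnit_iff_isUnit_det _).1 hx).ne_zero

theorem Continuous.matrix_inv {X : Type*} [TopologicalSpace X] {A : X → Matrix n n 𝕂}
    (hA : Continuous A) (h : ∀ x, IsUnit (A x)) : Continuous fun x => (A x)⁻¹ :=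
  continuous_iff_continuousAt.2 fun x => hA.continuousAt.matrix_inv (h x)

theorem HasDerivAt.matrix_inv [NormedAlgebra ℝ 𝕂] {A : ℝ → Matrix n n 𝕂} {A' : Matrix n n 𝕂}
    {t : ℝ} (hA : HasDerivAt A A' t) (ht : IsUnit (A t)) :
    HasDerivAt (fun s => (A s)⁻¹) (-((A t)⁻¹ * A' * (A t)⁻¹)) t := by
  have hinv := hA.continuousAt.matrix_inv ht
  have hunit : ∀ᶠ s in 𝓝 t, IsUnit (A s) := by
    have hdet := (continuous_id.matrix_det.continuousAt.comp hA.continuousAt).eventually_ne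
      ((isUnit_iff_isUnit_det _).1 ht).ne_zero
    filter_upwards [hdet] with s hs
    exact (isUnit_iff_isUnit_det _).2 (isUnit_iff_ne_zero.2 hs)
  -- `B⁻¹ - A⁻¹ = -B⁻¹ (B - A) A⁻¹`
  have hslope : ∀ᶠ s in 𝓝[≠] t,
      -((A s)⁻¹ * slope A t s * (A t)⁻¹) = slope (fun s => (A s)⁻¹) t s := by
    filter_upwards [nhdsWithin_le_nhds hunit] with s hs
    simp only [slope_def_module, Matrix.mul_smul, Matrix.smul_mul, mul_sub, sub_mul,
      Matrix.mul_assoc, nonsing_inv_mul _ ((isUnit_iff_isUnit_det _).1 hs),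
      mul_nonsing_inv _ ((isUnit_iff_isUnit_det _).1 ht), one_mul, mul_one, smul_sub]
    abel
  refine hasDerivAt_iff_tendsto_slope.2 <| Tendsto.congr' hslope ?_
  exact (((hinv.tendsto.mono_left nhdsWithin_le_nhds).mul
    (hasDerivAt_iff_tendsto_slope.1 hA)).mul tendsto_const_nhds).neg

end

variable {𝕂 : Type*} [RCLike 𝕂]

theorem Matrix.mul_inv_sub_mul_inv_eq_integral [DecidableEq n]
    {X Y a b : ℝ → Matrix n n 𝕂} (hX : ∀ t, HasDerivAt X (X t * a t) t)
    (hY : ∀ t, HasDerivAt Y (Y t * b t) t) (hYunit : ∀ t, IsUnit (Y t))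
    (ha : Continuous a) (hb : Continuous b) (w z : ℝ) :
    X z * (Y z)⁻¹ - X w * (Y w)⁻¹ = ∫ t in w..z, X t * (a t - b t) * (Y t)⁻¹ := by
  have hderiv (t : ℝ) :
      HasDerivAt (fun s => X s * (Y s)⁻¹) (X t * (a t - b t) * (Y t)⁻¹) t := by
    convert (hX t).matrix_mul ((hY t).matrix_inv (hYunit t)) using 1
    simp only [Matrix.mul_neg, ← Matrix.mul_assoc,
      nonsing_inv_mul _ ((isUnit_iff_isUnit_det _).1 (hYunit t)), Matrix.one_mul, Matrix.mul_sub,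
      Matrix.sub_mul, ← sub_eq_add_neg]
  have hXc : Continuous X := continuous_iff_continuousAt.2 fun t => (hX t).continuousAt
  have hYc : Continuous Y := continuous_iff_continuousAt.2 fun t => (hY t).continuousAt
  have hcont : Continuous fun t => X t * (a t - b t) * (Y t)⁻¹ :=
    (hXc.mul (ha.sub hb)).mul (hYc.matrix_inv hYunit)
  exact (integral_eq_sub_of_hasDerivAt (fun t _ => hderiv t) (hcont.intervalIntegrable _ _)).symm

theorem hasDerivAt_integral_mul_sub_mul {P ζ ζ' : ℝ → ℝ → Matrix n n 𝕂}
    {P' V : ℝ → Matrix n n 𝕂} {a b l : ℝ}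
    (hP : Continuous (uncurry P)) (hP' : ∀ t, HasDerivAt (P t) (P' t) l)
    (hζ : Continuous (uncurry ζ)) (hζ' : ∀ t μ, HasDerivAt (ζ t) (ζ' t μ) μ)
    (hζ'c : Continuous (uncurry ζ')) (hV : Continuous V) :
    HasDerivAt (fun μ => ∫ t in a..b, P t μ * (ζ t μ - ζ t l) * V t)
      (∫ t in a..b, P t l * ζ' t l * V t) l := by
  have hS : IsCompact (uIcc a b ×ˢ closedBall l 1) :=
    isCompact_uIcc.prod (isCompact_closedBall l 1)
  obtain ⟨BP, hBP⟩ := hS.exists_bound_of_continuousOn hP.continuousOn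
  obtain ⟨Bζ, hBζ⟩ := hS.exists_bound_of_continuousOn hζ'c.continuousOn
  obtain ⟨BV, hBV⟩ := isCompact_uIcc.exists_bound_of_continuousOn hV.continuousOn
  have hζlip : ∀ t ∈ uIcc a b, ∀ μ ∈ closedBall l 1, ‖ζ t μ - ζ t l‖ ≤ Bζ * |μ - l| :=
    fun t ht μ hμ => (convex_closedBall l 1).norm_image_sub_le_of_norm_hasDerivWithin_le
      (fun x _ => (hζ' t x).hasDerivWithinAt) (fun x hx => hBζ (t, x) ⟨ht, hx⟩)
      (mem_closedBall_self zero_le_one) hμ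
  have hslice : ∀ μ, Continuous fun t => P t μ * (ζ t μ - ζ t l) * V t := fun μ =>
    ((hP.uncurry_right μ).mul ((hζ.uncurry_right μ).sub (hζ.uncurry_right l))).mul hV
  set c : ℝ := (Fintype.card n : ℝ)
  refine hasDerivAt_integral_of_norm_sub_le (K := c * (c * BP * Bζ) * BV)
    (fun μ => (hslice μ).intervalIntegrable _ _) ?_ fun t _ => ?_
  · filter_upwards [closedBall_mem_nhds l one_pos] with μ hμ t ht
    have ht' := uIoc_subset_uIcc ht
    have hPμ := hBP (t, μ) ⟨ht', hμ⟩
    simp only [sub_self, Matrix.mul_zero, Matrix.zero_mul, sub_zero]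
    calc ‖P t μ * (ζ t μ - ζ t l) * V t‖
        ≤ c * (c * ‖P t μ‖ * ‖ζ t μ - ζ t l‖) * ‖V t‖ := by
          refine (norm_mul_le_card_mul _ _).trans ?_
          gcongr
          exact norm_mul_le_card_mul _ _
      _ ≤ c * (c * BP * (Bζ * |μ - l|)) * BV := by
          have hBP0 : 0 ≤ BP := (norm_nonneg _).trans hPμ
          have hBζ0 : 0 ≤ Bζ :=
            (norm_nonneg _).trans (hBζ (t, l) ⟨ht', mem_closedBall_self zero_le_one⟩)
          gcongr
          exacts [hPμ, hζlip t ht' μ hμ, hBV t ht']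
      _ = c * (c * BP * Bζ) * BV * |μ - l| := by ring
  · have h := ((hP' t).matrix_mul ((hζ' t l).sub_const (ζ t l))).matrix_mul
      (hasDerivAt_const l (V t))
    simp only [sub_self, Matrix.mul_zero, zero_add, add_zero] at h
    exact h

end

theorem lambda_derivative_formula
    (C Cl ζ ζl : ℝ → ℝ → Matrix (Fin 2) (Fin 2) ℂ)
    (hζcont : Continuous (fun zl : ℝ × ℝ => ζ zl.1 zl.2))
    (hCcont : Continuous (fun zl : ℝ × ℝ => C zl.1 zl.2))
    (hode : ∀ (l : ℝ) (z : ℝ), HasDerivAt (fun w => C w l) (C z l * ζ z l) z)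
    (hinit : ∀ l : ℝ, C 0 l = 1)
    (hunit : ∀ (z l : ℝ), IsUnit (C z l))
    (hCl : ∀ (z l : ℝ), HasDerivAt (fun m => C z m) (Cl z l) l)
    (hζl : ∀ (z l : ℝ), HasDerivAt (fun m => ζ z m) (ζl z l) l)
    (hζlcont : Continuous (fun zl : ℝ × ℝ => ζl zl.1 zl.2)) :
    ∀ (z l : ℝ),
      Cl z l * (C z l)⁻¹ =
        ∫ t in (0:ℝ)..z, C t l * ζl t l * (C t l)⁻¹ := by
  intro z l
  have hvariation : ∀ μ, C z μ * (C z l)⁻¹ - 1 =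
      ∫ t in (0:ℝ)..z, C t μ * (ζ t μ - ζ t l) * (C t l)⁻¹ := fun μ => by
    simpa [hinit] using Matrix.mul_inv_sub_mul_inv_eq_integral (hode μ) (hode l) (hunit · l)
      (hζcont.uncurry_right μ) (hζcont.uncurry_right l) 0 z
  have hlhs : HasDerivAt (fun μ => C z μ * (C z l)⁻¹ - 1) (Cl z l * (C z l)⁻¹) l := by
    have := ((hCl z l).matrix_mul (hasDerivAt_const l (C z l)⁻¹)).sub_const 1
    rwa [Matrix.mul_zero, add_zero] at this
  have hrhs := hasDerivAt_integral_mul_sub_mul (a := 0) (b := z) hCcont (hCl · l) hζcont hζl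
    hζlcont ((hCcont.uncurry_right l).matrix_inv (hunit · l))
  rw [funext hvariation] at hlhs
  exact hlhs.unique hrhs
end

section
/- Let a₀, b₀ : ℝ → ℂ be differentiable functions satisfying a₀(t)·conj(a₀(t)) − b₀(t)·conj(b₀(t)) = 1 for all t, and set κ(t) = conj(a₀(t))·b₀'(t) − b₀(t)·(conj(a₀))'(t) and m(t) = a₀(t)·b₀(t). Suppose m is periodic of period p. Then ∫_0^p Im( a₀(t)·conj(b₀(t))·κ(t) ) dt = ∫_0^p Im( conj(m(t))·m'(t) ) dt, i.e. it equals twice the signed area enclosed by the closed curve m. -/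
/-!
Both integrands agree pointwise. For `m = a b`, Leibniz' rule gives
`Im (conj m · m') = |a|² Im (conj b · b') + |b|² Im (conj a · a')`,
and expanding `a · conj b · κ` gives the same two terms, since `Im (a · conj a') = -Im (conj a · a')`.
-/

open Complex intervalIntegral ComplexConjugate

section PointwiseIdentity

variable (A B A' B' : ℂ)

theorem im_mul_conj_mul_sub_mul_conj :
    (A * conj B * (conj A * B' - B * conj A')).im =
      normSq A * (conj B * B').im + normSq B * (conj A * A').im := by
  simp only [mul_im, mul_re, sub_im, sub_re, conj_re, conj_im, normSq_apply]
  ring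

theorem im_conj_mul_mul_leibniz :
    (conj (A * B) * (A' * B + A * B')).im =
      normSq A * (conj B * B').im + normSq B * (conj A * A').im := by
  simp only [mul_im, mul_re, add_im, add_re, conj_re, conj_im, normSq_apply]
  ring

end PointwiseIdentity

theorem deriv_conj_comp (f : ℝ → ℂ) (t : ℝ) :
    deriv (fun s => conj (f s)) t = conj (deriv f t) :=
  deriv.star

theorem kappa_integral_equals_area_of_m_general
    (a₀ b₀ κ m : ℝ → ℂ) (p : ℝ)
    (ha : Differentiable ℝ a₀) (hb : Differentiable ℝ b₀)
    (hκ : ∀ t, κ t = (starRingEnd ℂ) (a₀ t) * deriv b₀ t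
        - b₀ t * deriv (fun s => (starRingEnd ℂ) (a₀ s)) t)
    (hm : ∀ t, m t = a₀ t * b₀ t) :
    (∫ t in (0:ℝ)..p, (a₀ t * (starRingEnd ℂ) (b₀ t) * κ t).im) =
      ∫ t in (0:ℝ)..p, ((starRingEnd ℂ) (m t) * deriv m t).im := by
  obtain rfl : m = a₀ * b₀ := funext hm
  refine integral_congr fun t _ => ?_
  rw [hκ t, deriv_conj_comp, Pi.mul_apply, deriv_mul (ha t) (hb t), im_mul_conj_mul_sub_mul_conj,
    im_conj_mul_mul_leibniz]

theorem kappa_integral_equals_area_of_m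
    (a₀ b₀ κ m : ℝ → ℂ) (p : ℝ) (hp : 0 < p)
    (ha : Differentiable ℝ a₀) (hb : Differentiable ℝ b₀)
    (hrel : ∀ t, a₀ t * (starRingEnd ℂ) (a₀ t) - b₀ t * (starRingEnd ℂ) (b₀ t) = 1)
    (hκ : ∀ t, κ t = (starRingEnd ℂ) (a₀ t) * deriv b₀ t
        - b₀ t * deriv (fun s => (starRingEnd ℂ) (a₀ s)) t)
    (hm : ∀ t, m t = a₀ t * b₀ t)
    (hmper : Function.Periodic m p) :
    (∫ t in (0:ℝ)..p, (a₀ t * (starRingEnd ℂ) (b₀ t) * κ t).im) =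
      ∫ t in (0:ℝ)..p, ((starRingEnd ℂ) (m t) * deriv m t).im :=
  kappa_integral_equals_area_of_m_general a₀ b₀ κ m p ha hb hκ hm
end

section
/- Define h(z) = (1 + i·sin z)/(i + sin z)² and ℓ(t) = ∫_0^t 2·h(s) ds for real t. Then ℓ(t) = −2·cos(t)/(i + sin t) + 2·cos(0)/(i + sin 0) (i.e. ℓ(t) = −2cos t/(i+sin t) − 2i), ℓ is periodic of period 2π, and ∫_0^{2π} Im( conj(ℓ(t)) · ℓ'(t) ) dt = 0. -/
open Complex Real intervalIntegral

open scoped ComplexConjugate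

/-!
With `w t = -2 cos t / (i + sin t)` one checks `w' = 2h` and `w 0 = 2i`, so `ℓ = w - 2i` by the
fundamental theorem of calculus, and periodicity is inherited from `cos` and `sin`.
For the area, `w (π - t) = -w t`, which makes the density `Im (conj w · w')` odd about `π / 2`;
being `2π`-periodic, it integrates to zero over a period. Translating a closed curve by `-2i`
changes that integral by `Im (conj (-2i) · (w (2π) - w 0)) = 0`.
-/

theorem Function.Periodic.deriv {E : Type*} [NormedAddCommGroup E] [NormedSpace ℝ E]
    {f : ℝ → E} {T : ℝ} (hf : Function.Periodic f T) : Function.Periodic (deriv f) T :=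
  fun x => by rw [← deriv_comp_add_const, funext hf]

theorem Function.Periodic.intervalIntegral_eq_zero_of_map_sub_eq_neg {E : Type*}
    [NormedAddCommGroup E] [NormedSpace ℝ E] {g : ℝ → E} {T : ℝ}
    (hg : Function.Periodic g T) {c : ℝ} (hodd : ∀ t, g (c - t) = -g t) :
    ∫ t in (0:ℝ)..T, g t = 0 := by
  have hreflect := integral_comp_sub_left g c (a := (c - T) / 2) (b := (c - T) / 2 + T)
  simp only [hodd, integral_neg, show c - ((c - T) / 2 + T) = (c - T) / 2 by ring,
    show c - (c - T) / 2 = (c - T) / 2 + T by ring] at hreflect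
  rw [neg_eq_iff_add_eq_zero, ← two_smul ℝ, smul_eq_zero] at hreflect
  rw [← zero_add T, hg.intervalIntegral_add_eq 0 ((c - T) / 2),
    hreflect.resolve_left two_ne_zero]

theorem deriv_eq_of_map_sub_eq_neg {E : Type*} [NormedAddCommGroup E] [NormedSpace ℝ E]
    {f : ℝ → E} {c : ℝ} (hf : ∀ t, f (c - t) = -f t) (t : ℝ) :
    deriv f (c - t) = deriv f t := by
  have h := deriv_comp_const_sub (f := f) (a := c) (x := t)
  simp only [hf, deriv.fun_neg] at h
  exact (neg_inj.mp h).symm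

/-- Its integral over a closed curve is twice the signed area the curve encloses. -/
noncomputable def areaDensity (γ : ℝ → ℂ) (t : ℝ) : ℝ := (conj (γ t) * deriv γ t).im

section AreaDensity

variable {γ : ℝ → ℂ}

theorem areaDensity_map_sub_eq_neg {c : ℝ} (hγ : ∀ t, γ (c - t) = -γ t) (t : ℝ) :
    areaDensity γ (c - t) = -areaDensity γ t := by
  simp only [areaDensity, hγ, deriv_eq_of_map_sub_eq_neg hγ, map_neg, neg_mul, neg_im]

theorem Function.Periodic.areaDensity {T : ℝ} (hγ : Function.Periodic γ T) :
    Function.Periodic (areaDensity γ) T := fun t => by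
  simp only [_root_.areaDensity, hγ t, hγ.deriv t]

theorem integral_areaDensity_add_const (hγ : ContDiff ℝ 1 γ) (c : ℂ) (a b : ℝ) :
    ∫ t in a..b, areaDensity (fun t => γ t + c) t
      = (∫ t in a..b, areaDensity γ t) + (conj c * (γ b - γ a)).im := by
  obtain ⟨hdiff, hcont⟩ := contDiff_one_iff_deriv.mp hγ
  have hsplit : ∀ t, areaDensity (fun t => γ t + c) t
      = areaDensity γ t + (conj c * deriv γ t).im := fun t => by
    simp only [areaDensity, deriv_add_const, map_add, add_mul, add_im]
  have hint : ∫ t in a..b, (conj c * deriv γ t).im = (conj c * (γ b - γ a)).im := by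
    rw [← integral_deriv_eq_sub (fun t _ => hdiff t) (hcont.intervalIntegrable a b),
      ← integral_const_mul]
    exact intervalIntegral_im ((continuous_const.mul hcont).intervalIntegrable a b)
  have hγint : IntervalIntegrable (areaDensity γ) MeasureTheory.volume a b :=
    (continuous_im.comp ((continuous_conj.comp hdiff.continuous).mul hcont)).intervalIntegrable
      a b
  have hcint : IntervalIntegrable (fun t => (conj c * deriv γ t).im) MeasureTheory.volume a b :=
    (continuous_im.comp (continuous_const.mul hcont)).intervalIntegrable a b
  simp only [hsplit]
  rw [integral_add hγint hcint, hint]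

end AreaDensity

noncomputable def lemniscate (t : ℝ) : ℂ := -2 * Complex.cos t / (I + Complex.sin t)

theorem I_add_sin_ofReal_ne_zero (t : ℝ) : I + Complex.sin t ≠ 0 := fun h => by
  simpa [← ofReal_sin] using congrArg Complex.im h

theorem hasDerivAt_lemniscate (t : ℝ) :
    HasDerivAt lemniscate (2 * ((1 + I * Complex.sin t) / (I + Complex.sin t) ^ 2)) t := by
  have hz := I_add_sin_ofReal_ne_zero t
  have hnum : HasDerivAt (fun z : ℂ => -2 * Complex.cos z) (2 * Complex.sin t) t := by
    simpa using (Complex.hasDerivAt_cos t).const_mul (-2)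
  have hden : HasDerivAt (fun z : ℂ => I + Complex.sin z) (Complex.cos t) t := by
    simpa using (Complex.hasDerivAt_sin t).const_add I
  refine ((hnum.div hden hz).comp_ofReal).congr_deriv ?_
  rw [mul_div_assoc', div_eq_div_iff (pow_ne_zero 2 hz) (pow_ne_zero 2 hz)]
  linear_combination (2 * (I + Complex.sin t) ^ 2) * Complex.sin_sq_add_cos_sq (t : ℂ)

theorem continuous_deriv_lemniscate :
    Continuous fun t : ℝ => 2 * ((1 + I * Complex.sin t) / (I + Complex.sin t) ^ 2) := by
  fun_prop (disch := exact fun t => pow_ne_zero 2 (I_add_sin_ofReal_ne_zero t))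

theorem contDiff_lemniscate : ContDiff ℝ 1 lemniscate :=
  contDiff_one_iff_deriv.mpr ⟨fun t => (hasDerivAt_lemniscate t).differentiableAt,
    by rw [funext fun t => (hasDerivAt_lemniscate t).deriv]; exact continuous_deriv_lemniscate⟩

theorem lemniscate_zero : lemniscate 0 = 2 * I := by
  rw [lemniscate, div_eq_iff (by simp)]
  simp only [ofReal_zero, Complex.cos_zero, Complex.sin_zero, add_zero]
  linear_combination (-2) * I_sq

theorem lemniscate_periodic : Function.Periodic lemniscate (2 * π) := fun t => by
  simp only [lemniscate, ofReal_add, ofReal_mul, ofReal_ofNat, Complex.cos_add_two_pi,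
    Complex.sin_add_two_pi]

theorem lemniscate_pi_sub (t : ℝ) : lemniscate (π - t) = -lemniscate t := by
  simp only [lemniscate, ofReal_sub, Complex.cos_pi_sub, Complex.sin_pi_sub]
  ring

theorem lemniscate_example
    (h : ℝ → ℂ) (hh : ∀ t : ℝ, h t = (1 + Complex.I * Complex.sin t) / (Complex.I + Complex.sin t) ^ 2)
    (ℓ : ℝ → ℂ) (hℓ : ∀ t : ℝ, ℓ t = ∫ s in (0:ℝ)..t, 2 * h s) :
    (∀ t : ℝ, ℓ t = -2 * Complex.cos t / (Complex.I + Complex.sin t) - 2 * Complex.I) ∧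
    Function.Periodic ℓ (2 * π) ∧
    (∫ t in (0:ℝ)..2 * π, ((starRingEnd ℂ) (ℓ t) * deriv ℓ t).im) = 0 := by
  have hℓ_eq : ∀ t, ℓ t = lemniscate t - 2 * I := fun t => by
    simp only [hℓ, hh]
    rw [integral_eq_sub_of_hasDerivAt (fun s _ => hasDerivAt_lemniscate s)
      (continuous_deriv_lemniscate.intervalIntegrable 0 t), lemniscate_zero]
  refine ⟨hℓ_eq, fun t => by rw [hℓ_eq, hℓ_eq, lemniscate_periodic t], ?_⟩
  obtain rfl : ℓ = fun t => lemniscate t + -(2 * I) :=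
    funext fun t => by rw [hℓ_eq, sub_eq_add_neg]
  change ∫ t in (0:ℝ)..2 * π, areaDensity (fun t => lemniscate t + -(2 * I)) t = 0
  rw [integral_areaDensity_add_const contDiff_lemniscate, lemniscate_periodic.eq, sub_self,
    lemniscate_periodic.areaDensity.intervalIntegral_eq_zero_of_map_sub_eq_neg
      (areaDensity_map_sub_eq_neg lemniscate_pi_sub), mul_zero, zero_im, add_zero]
end

section
/- Define h(t) = exp(−iπ/4) + √6·cos(4t) and α(t) = 2·e^{2it}·h(t). Then ∫_0^π α(t) dt = 0, and the antiderivative ℓ(t) = ∫_0^t α(s) ds is a closed curve of period π satisfying ∫_0^π Im( conj(ℓ(t)) ℓ'(t) ) dt = 0. -/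
/-!
Writing `u = e^{2it}` and `c = e^{-iπ/4}`, the velocity is the trigonometric polynomial
`α = 2c u + √6 u³ + √6 u⁻¹` of period `π` with no constant term, so `ℓ` is itself a
`π`-periodic trigonometric polynomial `Σ a_k u^k` (up to a constant), where `2ik a_k` is the
coefficient of `u^k` in `α`.
Orthogonality of the modes on `[0, π]` gives `∫ Im (conj ℓ · ℓ') = 2π Σ k |a_k|²`, and here
`Σ k |a_k|² = -3/2 + 1 + 3 · 1/6 = 0`.
-/

open Complex Real intervalIntegral

open scoped ComplexConjugate

noncomputable def trigPoly (T : ℝ) (S : Finset ℤ) (a : ℤ → ℂ) (t : ℝ) : ℂ :=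
  ∑ k ∈ S, a k * fourier k (t : AddCircle T)

theorem integral_conj_fourier_mul_fourier {T : ℝ} [hT : Fact (0 < T)] (j k : ℤ) :
    ∫ t in (0 : ℝ)..T, conj (fourier j (t : AddCircle T)) * fourier k (t : AddCircle T) =
      if j = k then (T : ℂ) else 0 := by
  have h := congrFun (fourierCoeff_fourier (T := T) k) j
  rw [fourierCoeff_eq_intervalIntegral _ _ 0, zero_add, Pi.single_apply] at h
  simp_rw [smul_eq_mul, fourier_neg, one_div, inv_smul_eq_iff₀ hT.out.ne'] at h
  rw [h]
  split_ifs <;> simp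

namespace trigPoly

variable {T : ℝ} {S : Finset ℤ} {a : ℤ → ℂ}

theorem periodic : Function.Periodic (trigPoly T S a) T := by
  intro t
  simp only [trigPoly, AddCircle.coe_add_period]

@[fun_prop]
theorem continuous : Continuous (trigPoly T S a) := by
  unfold trigPoly
  fun_prop

theorem hasDerivAt (t : ℝ) :
    HasDerivAt (trigPoly T S a) (trigPoly T S (fun k => 2 * π * I * k / T * a k) t) t := by
  unfold trigPoly
  convert HasDerivAt.fun_sum fun k _ => (hasDerivAt_fourier T k t).const_mul (a k) using 1
  · ext; simp
  · exact Finset.sum_congr rfl fun k _ => by ring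

theorem deriv_eq : deriv (trigPoly T S a) = trigPoly T S (fun k => 2 * π * I * k / T * a k) :=
  funext fun t => (hasDerivAt t).deriv

theorem integral_deriv (u v : ℝ) :
    ∫ t in u..v, deriv (trigPoly T S a) t = trigPoly T S a v - trigPoly T S a u :=
  integral_deriv_eq_sub (fun t _ => (hasDerivAt t).differentiableAt)
    (by rw [deriv_eq]; exact continuous.intervalIntegrable _ _)

theorem integral_deriv_eq_zero : ∫ t in (0 : ℝ)..T, deriv (trigPoly T S a) t = 0 := by
  rw [integral_deriv, sub_eq_zero]
  simpa using periodic (T := T) (S := S) (a := a) 0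

variable [Fact (0 < T)]

theorem integral_conj_mul (b : ℤ → ℂ) :
    ∫ t in (0 : ℝ)..T, conj (trigPoly T S a t) * trigPoly T S b t =
      T * ∑ k ∈ S, conj (a k) * b k := by
  have hint (j k : ℤ) : IntervalIntegrable (fun t : ℝ => conj (a j) * b k *
      (conj (fourier j (t : AddCircle T)) * fourier k (t : AddCircle T))) MeasureTheory.volume 0 T :=
    Continuous.intervalIntegrable (by fun_prop) _ _
  simp_rw [trigPoly, map_sum, map_mul, Finset.sum_mul_sum, mul_mul_mul_comm]
  rw [integral_finsetSum fun j _ => Continuous.intervalIntegrable (by fun_prop) _ _]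
  simp_rw [integral_finsetSum fun k _ => hint _ k, integral_const_mul,
    integral_conj_fourier_mul_fourier, mul_ite, mul_zero, Finset.sum_ite_eq, Finset.mul_sum]
  exact Finset.sum_congr rfl fun k hk => by simp [hk, mul_comm]

/-- The area formula: twice the signed area swept by a closed trigonometric curve,
seen from any point `c`. -/
theorem integral_im_conj_sub_mul_deriv (c : ℂ) :
    ∫ t in (0 : ℝ)..T, (conj (trigPoly T S a t - c) * deriv (trigPoly T S a) t).im =
      2 * π * ∑ k ∈ S, k * normSq (a k) := by
  have hP : IntervalIntegrable (deriv (trigPoly T S a)) MeasureTheory.volume 0 T := by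
    rw [deriv_eq]; exact continuous.intervalIntegrable _ _
  have hcP : IntervalIntegrable (fun t => conj (trigPoly T S a t) * deriv (trigPoly T S a) t)
      MeasureTheory.volume 0 T := by
    rw [deriv_eq]; exact Continuous.intervalIntegrable (by fun_prop) _ _
  have hsum : (T : ℂ) * ∑ k ∈ S, conj (a k) * (2 * π * I * k / T * a k) =
      ((2 * π * ∑ k ∈ S, k * normSq (a k) : ℝ) : ℂ) * I := by
    have hT : (T : ℂ) ≠ 0 := by exact_mod_cast (Fact.out : 0 < T).ne'
    simp_rw [Finset.mul_sum]
    push_cast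
    rw [Finset.sum_mul]
    refine Finset.sum_congr rfl fun k _ => ?_
    rw [← mul_conj]
    field_simp
  have him := intervalIntegral_im (𝕜 := ℂ) (hcP.sub (hP.const_mul (conj c)))
  simp only [RCLike.im_to_complex] at him
  simp_rw [map_sub, sub_mul, him]
  rw [integral_sub hcP (hP.const_mul _), integral_const_mul, integral_deriv_eq_zero, deriv_eq,
    integral_conj_mul, hsum]
  simp

end trigPoly

theorem fourier_coe_apply_pi (k : ℤ) (t : ℝ) :
    fourier k (t : AddCircle π) = exp (2 * I * t) ^ k := by
  rw [fourier_coe_apply, ← exp_int_mul]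
  congr 1
  field_simp

theorem cos_four_mul_eq_zpow (t : ℝ) :
    Complex.cos (4 * t) = (exp (2 * I * t) ^ (2 : ℤ) + exp (2 * I * t) ^ (-2 : ℤ)) / 2 := by
  rw [Complex.cos, ← exp_int_mul, ← exp_int_mul]
  push_cast
  ring_nf

/-- The Fourier coefficients of `ℓ`, on the modes `e^{2ikt}`, `k ∈ {-1, 1, 3}`. -/
noncomputable def ellCoeff (k : ℤ) : ℂ :=
  if k = 1 then -I * exp (-I * π / 4) else
  if k = 3 then -I * Real.sqrt 6 / 6 else
  if k = -1 then I * Real.sqrt 6 / 2 else 0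

theorem deriv_trigPoly_ellCoeff (t : ℝ) :
    deriv (trigPoly π {-1, 1, 3} ellCoeff) t = 2 * exp (2 * I * t) *
      (exp (-I * π / 4) + (Real.sqrt 6 : ℂ) * Complex.cos (4 * t)) := by
  rw [trigPoly.deriv_eq]
  simp only [trigPoly, fourier_coe_apply_pi, cos_four_mul_eq_zpow]
  simp [ellCoeff]
  field_simp
  rw [I_sq]
  ring

theorem sum_mul_normSq_ellCoeff :
    ∑ k ∈ ({-1, 1, 3} : Finset ℤ), (k : ℝ) * normSq (ellCoeff k) = 0 := by
  have hc : normSq (exp (-(I * π) / 4)) = 1 := by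
    rw [normSq_eq_norm_sq, show -(I * π) / 4 = ((-π / 4 : ℝ) : ℂ) * I by push_cast; ring,
      norm_exp_ofReal_mul_I, one_pow]
  simp [ellCoeff, hc]
  norm_num

theorem c_eq_one_example
    (α : ℝ → ℂ)
    (hα : ∀ t : ℝ, α t = 2 * Complex.exp (2 * Complex.I * t) *
        (Complex.exp (-Complex.I * π / 4) + (Real.sqrt 6 : ℂ) * Complex.cos (4 * t)))
    (ℓ : ℝ → ℂ) (hℓ : ∀ t : ℝ, ℓ t = ∫ s in (0:ℝ)..t, α s) :
    (∫ t in (0:ℝ)..π, α t) = 0 ∧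
    Function.Periodic ℓ π ∧
    (∫ t in (0:ℝ)..π, ((starRingEnd ℂ) (ℓ t) * deriv ℓ t).im) = 0 := by
  have : Fact (0 < π) := ⟨pi_pos⟩
  set P := trigPoly π {-1, 1, 3} ellCoeff
  have hαP : α = deriv P := funext fun t => by rw [hα, deriv_trigPoly_ellCoeff]
  have hℓP : ℓ = fun t => P t - P 0 := funext fun t => by rw [hℓ, hαP, trigPoly.integral_deriv]
  refine ⟨?_, ?_, ?_⟩
  · rw [hαP]
    exact trigPoly.integral_deriv_eq_zero
  · rw [hℓP]
    exact fun t => congrArg (· - P 0) (trigPoly.periodic t)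
  · rw [hℓP]
    simp_rw [deriv_sub_const]
    rw [trigPoly.integral_im_conj_sub_mul_deriv, sum_mul_normSq_ellCoeff, mul_zero]
end

section
/- Let a₀(z) = e^{−iz}·cosh(sin z), b₀(z) = sinh(sin z). Then the Maurer–Cartan form C₀⁻¹ C₀' of C₀(z) = !![a₀(z), b₀(z); b₀(z), e^{iz} cosh(sin z)] has (1,1)-entry ν(z) = −i·cosh²(sin z) and (1,2)-entry κ(z) = e^{iz}·( cos z − (i/2)·sinh(2 sin z) ). -/
open Matrix Complex

/-!
Write `C₀ = !![a, b; b, d]`. Since `det C₀ = 1`, the inverse `C₀⁻¹` is the adjugate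
`!![d, -b; -b, a]`, so the first row of `C₀⁻¹ C₀'` is `(d a' - b b', d b' - b d')`.
Inserting the derivatives and simplifying with `e^{iz} e^{-iz} = 1`, `cosh² - sinh² = 1`
and `sinh 2x = 2 sinh x cosh x` gives `ν` and `κ`.
-/

theorem Matrix.inv_fin_two_of_det_eq_one {R : Type*} [CommRing R] {a b c d : R}
    (h : det !![a, b; c, d] = 1) : (!![a, b; c, d])⁻¹ = !![d, -b; -c, a] := by
  rw [inv_def, h, Ring.inverse_one, one_smul, adjugate_fin_two_of]

theorem Complex.hasDerivAt_cosh_sin (z : ℂ) :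
    HasDerivAt (fun w => cosh (sin w)) (sinh (sin z) * cos z) z :=
  (hasDerivAt_cosh (sin z)).comp z (hasDerivAt_sin z)

theorem Complex.hasDerivAt_sinh_sin (z : ℂ) :
    HasDerivAt (fun w => sinh (sin w)) (cosh (sin z) * cos z) z :=
  (hasDerivAt_sinh (sin z)).comp z (hasDerivAt_sin z)

theorem Complex.hasDerivAt_exp_const_mul_mul_cosh_sin (c z : ℂ) :
    HasDerivAt (fun w => exp (c * w) * cosh (sin w))
      (exp (c * z) * (c * cosh (sin z) + sinh (sin z) * cos z)) z := by
  have hexp : HasDerivAt (fun w => exp (c * w)) (exp (c * z) * c) z := by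
    simpa using ((hasDerivAt_id z).const_mul c).cexp
  exact (hexp.mul (hasDerivAt_cosh_sin z)).congr_deriv (by ring)

theorem Complex.exp_neg_mul_mul_exp_mul (c z : ℂ) : exp (-c * z) * exp (c * z) = 1 := by
  rw [← exp_add, neg_mul, neg_add_cancel, exp_zero]

theorem full_frame_maurer_cartan_example
    (C₀ C₀' : ℂ → Matrix (Fin 2) (Fin 2) ℂ)
    (hC₀ : ∀ z, C₀ z = !![Complex.exp (-Complex.I * z) * Complex.cosh (Complex.sin z),
        Complex.sinh (Complex.sin z);
        Complex.sinh (Complex.sin z),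
        Complex.exp (Complex.I * z) * Complex.cosh (Complex.sin z)])
    (hC₀' : ∀ z, C₀' z =
        !![deriv (fun w => Complex.exp (-Complex.I * w) * Complex.cosh (Complex.sin w)) z,
           deriv (fun w => Complex.sinh (Complex.sin w)) z;
           deriv (fun w => Complex.sinh (Complex.sin w)) z,
           deriv (fun w => Complex.exp (Complex.I * w) * Complex.cosh (Complex.sin w)) z]) :
    ∀ z : ℂ,
      ((C₀ z)⁻¹ * C₀' z) 0 0 = -Complex.I * Complex.cosh (Complex.sin z) ^ 2 ∧
      ((C₀ z)⁻¹ * C₀' z) 0 1 = Complex.exp (Complex.I * z) *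
        (Complex.cos z - (Complex.I / 2) * Complex.sinh (2 * Complex.sin z)) := by
  intro z
  have hexp := exp_neg_mul_mul_exp_mul I z
  have hcs := cosh_sq_sub_sinh_sq (sin z)
  have hdet : det (C₀ z) = 1 := by
    rw [hC₀, det_fin_two_of]
    linear_combination cosh (sin z) ^ 2 * hexp + hcs
  rw [hC₀] at hdet ⊢
  rw [inv_fin_two_of_det_eq_one hdet, hC₀',
    (hasDerivAt_exp_const_mul_mul_cosh_sin (-I) z).deriv,
    (hasDerivAt_exp_const_mul_mul_cosh_sin I z).deriv, (hasDerivAt_sinh_sin z).deriv,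
    sinh_two_mul]
  simp only [mul_apply, Fin.sum_univ_two, of_apply, cons_val', cons_val_zero, cons_val_one,
    empty_val', cons_val_fin_one]
  constructor
  · linear_combination (-I * cosh (sin z) ^ 2 + cosh (sin z) * sinh (sin z) * cos z) * hexp
  · linear_combination exp (I * z) * cos z * hcs
end
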